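/- arXiv:2308.01388 — 2 statements merged into one kernel-verified Lean document; each statement's English description precedes it below -/
import Mathlib

section
/- For every real k>0 and all real numbers x and v, E_k^{rk1}(x,v) = 𝒥_{k−1/2}(xv) + (xv/(2k+1)) · 𝒥_{k+1/2}(xv). -/
open Real MeasureTheory

/-- The rank-one Dunkl kernel `E_k^{rk1}(x,v)`. -/
noncomputable def Erk1 (k x v : ℝ) : ℝ :=
  (Real.Gamma (k + 1/2) / (Real.sqrt Real.pi * Real.Gamma k)) *
    ∫ z in (-1 : ℝ)..1, Real.exp (z * x * v) * (1 - z) ^ (k - 1) * (1 + z) ^ k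

/-- The normalized modified Bessel function `𝒥_a(y)`, for `a > -1/2`. -/
noncomputable def besselJ (a y : ℝ) : ℝ :=
  (Real.Gamma (a + 1) / (Real.sqrt Real.pi * Real.Gamma (a + 1/2))) *
    ∫ z in (-1 : ℝ)..1, Real.exp (y * z) * (1 - z ^ 2) ^ (a - 1/2)

/-- `W_k(λ,ν)`. -/
noncomputable def Wk (k l1 l2 l3 n1 n2 : ℝ) : ℝ :=
  ((l1 - n1) * (l1 - n2) * (n1 - l2) * (l2 - n2) * (n1 - l3) * (n2 - l3)) ^ (k - 1)

/-- `V(λ) = (λ1-λ2)(λ1-λ3)(λ2-λ3)`. -/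
def Vlam (l1 l2 l3 : ℝ) : ℝ := (l1 - l2) * (l1 - l3) * (l2 - l3)

/-- The `A₂` Dunkl kernel `E_k(X,λ)`, defined via the rank-one kernel formula. -/
noncomputable def EkA2 (k x1 x2 x3 l1 l2 l3 : ℝ) : ℝ :=
  (3 * Real.Gamma (3 * k) / (Vlam l1 l2 l3 ^ (2 * k) * Real.Gamma k ^ 2)) *
    ∫ n2 in l3..l2, ∫ n1 in l2..l1,
      ((n1 - l2) * (l1 - n2) * Erk1 k ((x1 - x2) / 2) (n1 - n2)
        + (l1 - n1) * (l2 - n2) * Erk1 k (-(x1 - x2) / 2) (n1 - n2))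
      * ((n1 - l3) * (n2 - l3)) * Real.exp ((x1 + x2 - 2 * x3) * (n1 + n2) / 2)
      * Wk k l1 l2 l3 n1 n2

/-!
Since `(1 - z)^(k-1) (1 + z)^k = (1 + z) (1 - z²)^(k-1)` on `[-1, 1]`, the kernel splits as
`c ∫ e^{yz} (1 - z²)^(k-1) + c ∫ z e^{yz} (1 - z²)^(k-1)` with `y = xv`, and the first term is
`𝒥_{k-1/2}(y)`. Integrating by parts, `2k ∫ z e^{yz} (1 - z²)^(k-1) = y ∫ e^{yz} (1 - z²)^k`,
which is `𝒥_{k+1/2}(y)` up to a constant that `Γ(a + 1) = a Γ(a)` turns into `y / (2k + 1)`.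
-/

open Set intervalIntegral

lemma intervalIntegrable_one_sub_sq_rpow {s : ℝ} (hs : -1 < s) :
    IntervalIntegrable (fun z : ℝ => (1 - z ^ 2) ^ s) volume (-1) 1 := by
  have hR : IntervalIntegrable (fun z : ℝ => (1 - z ^ 2) ^ s) volume 0 1 := by
    have hsing : IntervalIntegrable (fun z : ℝ => (1 - z) ^ s) volume 0 1 := by
      simpa using ((intervalIntegrable_rpow' (a := 0) (b := 1) hs).comp_sub_left 1).symm
    have hreg : ContinuousOn (fun z : ℝ => (1 + z) ^ s) (uIcc 0 1) := by
      refine ContinuousOn.rpow_const (by fun_prop) fun z hz => Or.inl ?_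
      rw [uIcc_of_le zero_le_one] at hz
      linarith [hz.1]
    refine (hsing.mul_continuousOn hreg).congr fun z hz => ?_
    rw [uIoc_of_le zero_le_one] at hz
    simp only [← mul_rpow (by linarith [hz.2] : (0:ℝ) ≤ 1 - z) (by linarith [hz.1] : (0:ℝ) ≤ 1 + z)]
    ring_nf
  have hL : IntervalIntegrable (fun z : ℝ => (1 - z ^ 2) ^ s) volume (-1) 0 := by
    rw [IntervalIntegrable.iff_comp_neg]
    simpa using hR.symm
  exact hL.trans hR

lemma one_sub_rpow_sub_one_mul_one_add_rpow {k z : ℝ} (hk : 0 < k) (hz : z ∈ Icc (-1 : ℝ) 1) :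
    (1 - z) ^ (k - 1) * (1 + z) ^ k = (1 + z) * (1 - z ^ 2) ^ (k - 1) := by
  rcases hz.1.eq_or_lt with rfl | hlt
  · norm_num [zero_rpow hk.ne']
  have hpos : 0 < 1 + z := by linarith
  rw [← sub_add_cancel k 1, rpow_add_one hpos.ne', add_sub_cancel_right,
    show 1 - z ^ 2 = (1 - z) * (1 + z) by ring, mul_rpow (by linarith [hz.2]) hpos.le]
  ring

-- `(1 - z²)^k` vanishes at `±1` and has derivative `-2kz (1 - z²)^(k-1)`.
lemma integral_deriv_mul_one_sub_sq_rpow {k : ℝ} (hk : 0 < k) {φ φ' : ℝ → ℝ}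
    (hφ : ∀ z, HasDerivAt φ (φ' z) z) (hφ' : Continuous φ') :
    ∫ z in (-1:ℝ)..1, φ' z * (1 - z ^ 2) ^ k
      = 2 * k * ∫ z in (-1:ℝ)..1, z * (φ z * (1 - z ^ 2) ^ (k - 1)) := by
  have hw : Continuous fun z : ℝ => (1 - z ^ 2) ^ k :=
    (continuous_const.sub (continuous_pow 2)).rpow_const fun _ => Or.inr hk.le
  have hw' : ∀ z ∈ Ioo (min (-1 : ℝ) 1) (max (-1) 1),
      HasDerivAt (fun z : ℝ => (1 - z ^ 2) ^ k) (-(2 * k) * (z * (1 - z ^ 2) ^ (k - 1))) z := by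
    intro z hz
    rw [min_eq_left (by norm_num), max_eq_right (by norm_num)] at hz
    have hpos : 0 < 1 - z ^ 2 := by nlinarith [hz.1, hz.2]
    convert ((hasDerivAt_pow 2 z).const_sub 1).rpow_const (p := k) (Or.inl hpos.ne') using 1
    norm_num
    ring
  have hw'int : IntervalIntegrable (fun z : ℝ => -(2 * k) * (z * (1 - z ^ 2) ^ (k - 1)))
      volume (-1) 1 :=
    ((intervalIntegrable_one_sub_sq_rpow (by linarith)).continuousOn_mul
      continuous_id.continuousOn).const_mul _
  have hibp := integral_mul_deriv_eq_deriv_mul_of_hasDerivAt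
    (fun z _ => (hφ z).continuousAt.continuousWithinAt) hw.continuousOn
    (fun z _ => hφ z) hw' (hφ'.intervalIntegrable _ _) hw'int
  norm_num [zero_rpow hk.ne'] at hibp
  rw [← hibp, ← intervalIntegral.integral_const_mul]
  congr 1 with z
  ring

lemma Erk1_eq_integral_one_add_mul {k : ℝ} (hk : 0 < k) (x v : ℝ) :
    Erk1 k x v = Real.Gamma (k + 1/2) / (√π * Real.Gamma k) *
      ∫ z in (-1:ℝ)..1, (1 + z) * (Real.exp (x * v * z) * (1 - z ^ 2) ^ (k - 1)) := by
  rw [Erk1, integral_congr fun z hz => ?_]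
  rw [uIcc_of_le (by norm_num)] at hz
  simp only [mul_assoc, one_sub_rpow_sub_one_mul_one_add_rpow hk hz, mul_comm z, mul_left_comm]

lemma besselJ_sub_half (k y : ℝ) :
    besselJ (k - 1/2) y = Real.Gamma (k + 1/2) / (√π * Real.Gamma k) *
      ∫ z in (-1:ℝ)..1, Real.exp (y * z) * (1 - z ^ 2) ^ (k - 1) := by
  rw [besselJ]
  ring_nf

lemma mul_besselJ_add_half {k : ℝ} (hk : 0 < k) (y : ℝ) :
    y * besselJ (k + 1/2) y = (2 * k + 1) * (Real.Gamma (k + 1/2) / (√π * Real.Gamma k)) *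
      ∫ z in (-1:ℝ)..1, z * (Real.exp (y * z) * (1 - z ^ 2) ^ (k - 1)) := by
  have hibp : y * ∫ z in (-1:ℝ)..1, Real.exp (y * z) * (1 - z ^ 2) ^ k
      = 2 * k * ∫ z in (-1:ℝ)..1, z * (Real.exp (y * z) * (1 - z ^ 2) ^ (k - 1)) := by
    rw [← intervalIntegral.integral_const_mul, ← integral_deriv_mul_one_sub_sq_rpow hk
      (fun z => by simpa using ((hasDerivAt_id z).const_mul y).exp) (by fun_prop)]
    congr 1 with z
    ring
  rw [besselJ, Real.Gamma_add_one (by positivity),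
    show k + 1/2 + 1/2 = k + 1 by ring, Real.Gamma_add_one hk.ne', add_sub_cancel_right,
    mul_left_comm, hibp]
  generalize ∫ z in (-1:ℝ)..1, z * (Real.exp (y * z) * (1 - z ^ 2) ^ (k - 1)) = I
  field_simp

/-- Bessel expansion of the rank-one Dunkl kernel. -/
theorem Erk1_eq_besselJ_add (k : ℝ) (hk : 0 < k) (x v : ℝ) :
    Erk1 k x v
      = besselJ (k - 1/2) (x * v) + (x * v / (2 * k + 1)) * besselJ (k + 1/2) (x * v) := by
  have hI0 : IntervalIntegrable (fun z => Real.exp (x * v * z) * (1 - z ^ 2) ^ (k - 1))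
      volume (-1) 1 :=
    (intervalIntegrable_one_sub_sq_rpow (by linarith)).continuousOn_mul (by fun_prop)
  have hI1 : IntervalIntegrable (fun z => z * (Real.exp (x * v * z) * (1 - z ^ 2) ^ (k - 1)))
      volume (-1) 1 :=
    hI0.continuousOn_mul continuous_id.continuousOn
  rw [Erk1_eq_integral_one_add_mul hk, besselJ_sub_half, div_mul_eq_mul_div (x * v),
    mul_besselJ_add_half hk]
  simp only [add_mul, one_mul, intervalIntegral.integral_add hI0 hI1]
  field_simp
end

section
/- (Lemma 5.1, formula (alpha+).) Uniformly over all λ ∈ C⁺ and all X ∈ a with x1 ≥ x2, one has V(λ)^{2k}·E_k(X,λ) ≍ ∫_{λ3}^{λ2} ∫_{λ2}^{λ1} [(ν1−ν2)(α_λ + α_X(ν1−λ2)(λ1−ν2)) / (1+α_X(ν1−ν2))^{k+1}] (ν1−λ3)(ν2−λ3) e^{(x1−x3)ν1 + (x2−x3)ν2} W_k(λ,ν) dν1 dν2. -/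
open Real MeasureTheory

/-!
Substituting `s = 1 ∓ z` gives `E^{rk1}(±x, v) = c_k e^{xv} K_{p,q}(xv)` for the Kummer-type
integral `K_{p,q}(t) = ∫₀² e^{-st} s^{p-1} (2-s)^{q-1} ds`, with `(p, q) = (k, k+1)` for `+x`
and `(k+1, k)` for `-x`. For `t ≥ 0` one has `K_{p,q}(t) ≍ (1+2t)^{-p}`: the lower bound comes
from `s ≤ 1/(1+2t)`, the upper one from `e^{-st} ≲ (1+2st)^{-(p+1)}`, whose product with
`s^{p-1}` has the primitive `s^p (1+2st)^{-p} / p`.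

With `a = (ν₁-λ₂)(λ₁-ν₂)`, `b = (λ₁-ν₁)(λ₂-ν₂)` and `D = 1 + α_X(ν₁-ν₂)` one has
`(ν₁-ν₂)(α_λ + α_X a) = a D + b`, so the integrand of `E_k(X,λ)` is pointwise comparable to
that of (α+). Comparability of nonnegative functions passes to integrals without integrability
assumptions: if one side is not integrable, neither is the other, and both integrals vanish.
-/

open Set

def Comparable (c C x y : ℝ) : Prop := 0 ≤ y ∧ c * y ≤ x ∧ x ≤ C * y

namespace Comparable

variable {c C a x y x' y' : ℝ}

theorem mono {c' C' : ℝ} (h : Comparable c C x y) (hc : c' ≤ c) (hC : C ≤ C') :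
    Comparable c' C' x y :=
  ⟨h.1, (mul_le_mul_of_nonneg_right hc h.1).trans h.2.1,
    h.2.2.trans (mul_le_mul_of_nonneg_right hC h.1)⟩

theorem add (h : Comparable c C x y) (h' : Comparable c C x' y') :
    Comparable c C (x + x') (y + y') :=
  ⟨add_nonneg h.1 h'.1, by linarith [h.2.1, h'.2.1], by linarith [h.2.2, h'.2.2]⟩

theorem mul_left (h : Comparable c C x y) (ha : 0 ≤ a) : Comparable c C (a * x) (a * y) :=
  ⟨mul_nonneg ha h.1, by nlinarith [h.2.1], by nlinarith [h.2.2]⟩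

theorem mul_right (h : Comparable c C x y) (ha : 0 ≤ a) : Comparable c C (x * a) (y * a) := by
  simpa only [mul_comm _ a] using h.mul_left ha

theorem const_mul (h : Comparable c C x y) (ha : 0 ≤ a) :
    Comparable (a * c) (a * C) (a * x) y :=
  ⟨h.1, by nlinarith [h.2.1], by nlinarith [h.2.2]⟩

theorem le_max_inv (h : Comparable c C x y) (hc : 0 < c) :
    (max C c⁻¹)⁻¹ * y ≤ x ∧ x ≤ max C c⁻¹ * y := by
  have hinv : (max C c⁻¹)⁻¹ ≤ c :=
    (inv_anti₀ (inv_pos.2 hc) (le_max_right _ _)).trans_eq (inv_inv c)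
  exact ⟨(mul_le_mul_of_nonneg_right hinv h.1).trans h.2.1,
    h.2.2.trans (mul_le_mul_of_nonneg_right (le_max_left _ _) h.1)⟩

theorem integral {α : Type*} [MeasurableSpace α] {μ : Measure α} {f g : α → ℝ} (hc : 0 < c)
    (hf : AEStronglyMeasurable f μ) (hg : AEStronglyMeasurable g μ)
    (hfg : ∀ᵐ z ∂μ, Comparable c C (f z) (g z)) :
    Comparable c C (∫ z, f z ∂μ) (∫ z, g z ∂μ) := by
  by_cases hgi : Integrable g μ
  · have hfi : Integrable f μ := (hgi.const_mul C).mono' hf <| hfg.mono fun z h => by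
      rw [Real.norm_of_nonneg ((mul_nonneg hc.le h.1).trans h.2.1)]
      exact h.2.2
    refine ⟨integral_nonneg_of_ae (hfg.mono fun z h => h.1), ?_, ?_⟩
    · rw [← integral_const_mul]
      exact integral_mono_ae (hgi.const_mul c) hfi (hfg.mono fun z h => h.2.1)
    · rw [← integral_const_mul]
      exact integral_mono_ae hfi (hgi.const_mul C) (hfg.mono fun z h => h.2.2)
  · have hfi : ¬ Integrable f μ := fun hfi => hgi <| (hfi.const_mul c⁻¹).mono' hg <|
      hfg.mono fun z h => by
        rw [Real.norm_of_nonneg h.1, inv_mul_eq_div, le_div_iff₀ hc, mul_comm]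
        exact h.2.1
    simp [integral_undef hgi, integral_undef hfi, Comparable]

theorem intervalIntegral {f g : ℝ → ℝ} {a b : ℝ} (hab : a ≤ b) (hc : 0 < c)
    (hf : Measurable f) (hg : Measurable g) (hfg : ∀ z ∈ Ioc a b, Comparable c C (f z) (g z)) :
    Comparable c C (∫ z in a..b, f z) (∫ z in a..b, g z) := by
  simp only [intervalIntegral.integral_of_le hab]
  exact integral hc hf.aestronglyMeasurable hg.aestronglyMeasurable
    (ae_restrict_of_forall_mem measurableSet_Ioc hfg)

end Comparable

theorem stronglyMeasurable_intervalIntegral_uncurry {f : ℝ → ℝ → ℝ}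
    (hf : Measurable (Function.uncurry f)) (a b : ℝ) :
    StronglyMeasurable fun x => ∫ y in a..b, f x y :=
  hf.stronglyMeasurable.integral_prod_right'.sub hf.stronglyMeasurable.integral_prod_right'

theorem min_rpow_le_rpow {a b x : ℝ} (r : ℝ) (ha : 0 < a) (hax : a ≤ x) (hxb : x ≤ b) :
    min (a ^ r) (b ^ r) ≤ x ^ r := by
  rcases le_total r 0 with hr | hr
  · exact min_le_of_right_le (rpow_le_rpow_of_nonpos (ha.trans_le hax) hxb hr)
  · exact min_le_of_left_le (rpow_le_rpow ha.le hax hr)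

theorem rpow_le_max_rpow {a b x : ℝ} (r : ℝ) (ha : 0 < a) (hax : a ≤ x) (hxb : x ≤ b) :
    x ^ r ≤ max (a ^ r) (b ^ r) := by
  rcases le_total r 0 with hr | hr
  · exact le_max_of_le_left (rpow_le_rpow_of_nonpos ha hax hr)
  · exact le_max_of_le_right (rpow_le_rpow (ha.le.trans hax) hxb hr)

theorem one_add_two_mul_rpow_le {q x : ℝ} (hq : 0 < q) (hx : 0 ≤ x) :
    (1 + 2 * x) ^ q ≤ max 1 (2 * q) ^ q * exp x := by
  set M := max 1 (2 * q)
  have hlin : 1 + 2 * x ≤ M * (1 + x / q) := by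
    have h2x : 2 * x ≤ M * (x / q) := calc
      2 * x = 2 * q * (x / q) := by field_simp
      _ ≤ M * (x / q) := mul_le_mul_of_nonneg_right (le_max_right _ _) (by positivity)
    linarith [le_max_left 1 (2 * q)]
  calc (1 + 2 * x) ^ q ≤ (M * (1 + x / q)) ^ q := rpow_le_rpow (by positivity) hlin hq.le
    _ = M ^ q * (1 + x / q) ^ q := mul_rpow (by positivity) (by positivity)
    _ ≤ M ^ q * exp (x / q) ^ q := by
      gcongr
      linarith [add_one_le_exp (x / q)]
    _ = M ^ q * exp x := by rw [← exp_mul, div_mul_cancel₀ _ hq.ne']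

theorem exp_neg_le_mul_rpow_neg {q x : ℝ} (hq : 0 < q) (hx : 0 ≤ x) :
    exp (-x) ≤ max 1 (2 * q) ^ q * (1 + 2 * x) ^ (-q) := by
  have hD : 0 < (1 + 2 * x) ^ q := rpow_pos_of_pos (by linarith) q
  rw [exp_neg, rpow_neg (by linarith), ← div_eq_mul_inv, le_div_iff₀ hD,
    inv_mul_le_iff₀ (exp_pos x)]
  exact (one_add_two_mul_rpow_le hq hx).trans_eq (mul_comm _ _)

theorem intervalIntegrable_rpow_mul_one_add_mul_rpow {p t : ℝ} (r : ℝ) (hp : 0 < p)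
    (ht : 0 ≤ t) :
    IntervalIntegrable (fun s => s ^ (p - 1) * (1 + 2 * (s * t)) ^ r) volume 0 1 :=
  (intervalIntegral.intervalIntegrable_rpow' (by linarith)).mul_continuousOn <|
    ContinuousOn.rpow_const (by fun_prop) fun s hs => by
      rw [uIcc_of_le zero_le_one] at hs
      exact Or.inl (by nlinarith [hs.1])

theorem integral_rpow_mul_one_add_mul_rpow {p t : ℝ} (hp : 0 < p) (ht : 0 ≤ t) :
    ∫ s in (0:ℝ)..1, s ^ (p - 1) * (1 + 2 * (s * t)) ^ (-(p + 1)) = (1 + 2 * t) ^ (-p) / p := by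
  have hderiv : ∀ s ∈ Ioo (0:ℝ) 1, HasDerivAt (fun s => s ^ p * (1 + 2 * (s * t)) ^ (-p) / p)
      (s ^ (p - 1) * (1 + 2 * (s * t)) ^ (-(p + 1))) s := by
    intro s hs
    have hB : 0 < 1 + 2 * (s * t) := by nlinarith [hs.1]
    have h := (((hasDerivAt_id s).mul_const t).const_mul 2 |>.const_add 1 |>.rpow_const
      (p := -p) (Or.inl hB.ne')) |> (Real.hasDerivAt_rpow_const (p := p) (Or.inl hs.1.ne')).mul
    refine (h.div_const p).congr_deriv ?_
    simp only [id]
    rw [show -p - 1 = -(p + 1) by ring, show s ^ p = s ^ (p - 1) * s by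
      rw [← rpow_add_one hs.1.ne', sub_add_cancel], show (1 + 2 * (s * t)) ^ (-p) =
      (1 + 2 * (s * t)) ^ (-(p + 1)) * (1 + 2 * (s * t)) by
      rw [← rpow_add_one hB.ne', show -(p + 1) + 1 = -p by ring]]
    field_simp
    ring
  have hcont : ContinuousOn (fun s => s ^ p * (1 + 2 * (s * t)) ^ (-p) / p) (Icc 0 1) := by
    refine ((continuousOn_id.rpow_const fun _ _ => Or.inr hp.le).mul
      (ContinuousOn.rpow_const (by fun_prop) fun s hs => Or.inl ?_)).div_const p
    nlinarith [hs.1]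
  rw [intervalIntegral.integral_eq_sub_of_hasDerivAt_of_le zero_le_one hcont hderiv
    (intervalIntegrable_rpow_mul_one_add_mul_rpow _ hp ht)]
  simp [zero_rpow hp.ne']

theorem intervalIntegrable_two_sub_rpow {q : ℝ} (hq : 0 < q) :
    IntervalIntegrable (fun s => (2 - s) ^ (q - 1)) volume 1 2 := by
  have h := (intervalIntegral.intervalIntegrable_rpow' (a := 1) (b := 0)
    (by linarith : -1 < q - 1)).comp_sub_left 2
  norm_num at h
  exact h

noncomputable def kummerIntegrand (p q t s : ℝ) : ℝ :=
  exp (-(s * t)) * s ^ (p - 1) * (2 - s) ^ (q - 1)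

noncomputable def kummerIntegral (p q t : ℝ) : ℝ :=
  ∫ s in (0:ℝ)..2, kummerIntegrand p q t s

theorem intervalIntegrable_kummerIntegrand {p q : ℝ} (t : ℝ) (hp : 0 < p) (hq : 0 < q) :
    IntervalIntegrable (kummerIntegrand p q t) volume 0 2 := by
  have hleft : IntervalIntegrable (kummerIntegrand p q t) volume 0 1 := by
    have hcont : ContinuousOn (fun s => exp (-(s * t)) * (2 - s) ^ (q - 1)) (uIcc 0 1) :=
      ContinuousOn.mul (by fun_prop) <| ContinuousOn.rpow_const (by fun_prop) fun s hs => by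
        rw [uIcc_of_le zero_le_one] at hs
        exact Or.inl (by linarith [hs.2])
    convert (intervalIntegral.intervalIntegrable_rpow' (r := p - 1) (by linarith)).mul_continuousOn
      hcont using 1
    funext s
    rw [kummerIntegrand]
    ring
  have hright : IntervalIntegrable (kummerIntegrand p q t) volume 1 2 := by
    have hcont : ContinuousOn (fun s => exp (-(s * t)) * s ^ (p - 1)) (uIcc 1 2) :=
      ContinuousOn.mul (by fun_prop) <| ContinuousOn.rpow_const (by fun_prop) fun s hs => by
        rw [uIcc_of_le one_le_two] at hs
        exact Or.inl (by linarith [hs.1])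
    convert (intervalIntegrable_two_sub_rpow hq).mul_continuousOn hcont using 1
    funext s
    rw [kummerIntegrand]
    ring
  exact hleft.trans hright

theorem le_kummerIntegral {p q t : ℝ} (hp : 0 < p) (hq : 0 < q) (ht : 0 ≤ t) :
    exp (-(1 / 2)) * min 1 (2 ^ (q - 1)) / p * (1 + 2 * t) ^ (-p) ≤ kummerIntegral p q t := by
  set m := (1 + 2 * t)⁻¹
  have hm0 : 0 < m := inv_pos.2 (by linarith)
  have hmD : m * (1 + 2 * t) = 1 := inv_mul_cancel₀ (by linarith)
  have hm1 : m ≤ 1 := by nlinarith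
  have hmt : m * t ≤ 1 / 2 := by nlinarith
  have hint : ∫ s in (0:ℝ)..m, s ^ (p - 1) = (1 + 2 * t) ^ (-p) / p := by
    rw [integral_rpow (Or.inl (by linarith)), sub_add_cancel, zero_rpow hp.ne', sub_zero,
      inv_rpow (by linarith), rpow_neg (by linarith)]
  have hI := intervalIntegrable_kummerIntegrand t hp hq
  calc exp (-(1 / 2)) * min 1 (2 ^ (q - 1)) / p * (1 + 2 * t) ^ (-p)
      = ∫ s in (0:ℝ)..m, exp (-(1 / 2)) * min 1 (2 ^ (q - 1)) * s ^ (p - 1) := by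
        rw [intervalIntegral.integral_const_mul, hint]
        ring
    _ ≤ ∫ s in (0:ℝ)..m, kummerIntegrand p q t s := by
      refine intervalIntegral.integral_mono_on hm0.le
        ((intervalIntegral.intervalIntegrable_rpow' (r := p - 1) (by linarith)).const_mul _)
        (hI.mono_set (by
          rw [uIcc_of_le hm0.le, uIcc_of_le zero_le_two]
          exact Icc_subset_Icc le_rfl (by linarith))) fun s hs => ?_
      have hexp : exp (-(1 / 2)) ≤ exp (-(s * t)) :=
        exp_le_exp.2 (by nlinarith [mul_le_mul_of_nonneg_right hs.2 ht])
      have hpow : min 1 (2 ^ (q - 1)) ≤ (2 - s) ^ (q - 1) := by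
        simpa only [one_rpow] using
          min_rpow_le_rpow (x := 2 - s) (q - 1) one_pos (by linarith [hs.2]) (by linarith [hs.1])
      calc exp (-(1 / 2)) * min 1 (2 ^ (q - 1)) * s ^ (p - 1)
          ≤ exp (-(s * t)) * (2 - s) ^ (q - 1) * s ^ (p - 1) := by
            gcongr
            exact rpow_nonneg hs.1 _
        _ = kummerIntegrand p q t s := by
            rw [kummerIntegrand]
            ring
    _ ≤ kummerIntegral p q t := by
      refine intervalIntegral.integral_mono_interval le_rfl hm0.le (by linarith)
        ((ae_restrict_iff' measurableSet_Ioc).2 (ae_of_all _ fun s hs => ?_)) hI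
      have := hs.1.le
      have : 0 ≤ 2 - s := by linarith [hs.2]
      rw [kummerIntegrand]
      positivity

theorem integral_kummerIntegrand_zero_one_le {p q t : ℝ} (hp : 0 < p) (hq : 0 < q) (ht : 0 ≤ t) :
    ∫ s in (0:ℝ)..1, kummerIntegrand p q t s
      ≤ max 1 (2 ^ (q - 1)) * max 1 (2 * (p + 1)) ^ (p + 1) / p * (1 + 2 * t) ^ (-p) := by
  set A := max (1:ℝ) (2 ^ (q - 1))
  set M := max 1 (2 * (p + 1)) ^ (p + 1)
  calc ∫ s in (0:ℝ)..1, kummerIntegrand p q t s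
      ≤ ∫ s in (0:ℝ)..1, A * M * (s ^ (p - 1) * (1 + 2 * (s * t)) ^ (-(p + 1))) := by
        refine intervalIntegral.integral_mono_on zero_le_one
          ((intervalIntegrable_kummerIntegrand t hp hq).mono_set
            (uIcc_subset_uIcc left_mem_uIcc (by simp)))
          ((intervalIntegrable_rpow_mul_one_add_mul_rpow _ hp ht).const_mul _) fun s hs => ?_
        have hexp := exp_neg_le_mul_rpow_neg (by linarith : 0 < p + 1) (mul_nonneg hs.1 ht)
        have hpow : (2 - s) ^ (q - 1) ≤ A := by
          simpa only [one_rpow] using rpow_le_max_rpow (x := 2 - s) (q - 1) one_pos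
            (by linarith [hs.2]) (by linarith [hs.1])
        have : 0 ≤ s ^ (p - 1) := rpow_nonneg hs.1 _
        have : 0 ≤ (1 + 2 * (s * t)) ^ (-(p + 1)) := rpow_nonneg (by nlinarith [hs.1]) _
        calc kummerIntegrand p q t s
            = exp (-(s * t)) * s ^ (p - 1) * (2 - s) ^ (q - 1) := rfl
          _ ≤ M * (1 + 2 * (s * t)) ^ (-(p + 1)) * s ^ (p - 1) * A := by
              gcongr
              exact rpow_nonneg (by linarith [hs.2]) _
          _ = A * M * (s ^ (p - 1) * (1 + 2 * (s * t)) ^ (-(p + 1))) := by ring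
    _ = A * M / p * (1 + 2 * t) ^ (-p) := by
        rw [intervalIntegral.integral_const_mul, integral_rpow_mul_one_add_mul_rpow hp ht]
        ring

theorem integral_kummerIntegrand_one_two_le {p q t : ℝ} (hp : 0 < p) (hq : 0 < q) (ht : 0 ≤ t) :
    ∫ s in (1:ℝ)..2, kummerIntegrand p q t s
      ≤ max 1 (2 ^ (p - 1)) * max 1 (2 * p) ^ p / q * (1 + 2 * t) ^ (-p) := by
  set B := max (1:ℝ) (2 ^ (p - 1))
  set N := max 1 (2 * p) ^ p
  have hint : ∫ s in (1:ℝ)..2, (2 - s) ^ (q - 1) = 1 / q := by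
    rw [intervalIntegral.integral_comp_sub_left (fun s => s ^ (q - 1)),
      integral_rpow (Or.inl (by linarith))]
    norm_num [zero_rpow hq.ne']
  calc ∫ s in (1:ℝ)..2, kummerIntegrand p q t s
      ≤ ∫ s in (1:ℝ)..2, B * N * (1 + 2 * t) ^ (-p) * (2 - s) ^ (q - 1) := by
        refine intervalIntegral.integral_mono_on one_le_two
          ((intervalIntegrable_kummerIntegrand t hp hq).mono_set
            (uIcc_subset_uIcc (by simp) right_mem_uIcc))
          ((intervalIntegrable_two_sub_rpow hq).const_mul _) fun s hs => ?_
        have hexp : exp (-(s * t)) ≤ N * (1 + 2 * t) ^ (-p) :=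
          (exp_le_exp.2 (by nlinarith [hs.1])).trans (exp_neg_le_mul_rpow_neg hp ht)
        have hpow : s ^ (p - 1) ≤ B := by
          simpa only [one_rpow] using rpow_le_max_rpow (p - 1) one_pos hs.1 hs.2
        have : 0 ≤ (2 - s) ^ (q - 1) := rpow_nonneg (by linarith [hs.2]) _
        calc kummerIntegrand p q t s
            = exp (-(s * t)) * s ^ (p - 1) * (2 - s) ^ (q - 1) := rfl
          _ ≤ N * (1 + 2 * t) ^ (-p) * B * (2 - s) ^ (q - 1) := by
              gcongr
              exact rpow_nonneg (by linarith [hs.1]) _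
          _ = B * N * (1 + 2 * t) ^ (-p) * (2 - s) ^ (q - 1) := by ring
    _ = B * N / q * (1 + 2 * t) ^ (-p) := by
        rw [intervalIntegral.integral_const_mul, hint]
        ring

theorem kummerIntegral_le {p q t : ℝ} (hp : 0 < p) (hq : 0 < q) (ht : 0 ≤ t) :
    kummerIntegral p q t ≤ (max 1 (2 ^ (q - 1)) * max 1 (2 * (p + 1)) ^ (p + 1) / p
      + max 1 (2 ^ (p - 1)) * max 1 (2 * p) ^ p / q) * (1 + 2 * t) ^ (-p) := by
  have hI := intervalIntegrable_kummerIntegrand t hp hq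
  rw [kummerIntegral, ← intervalIntegral.integral_add_adjacent_intervals (b := 1)
    (hI.mono_set (uIcc_subset_uIcc left_mem_uIcc (by simp)))
    (hI.mono_set (uIcc_subset_uIcc (by simp) right_mem_uIcc))]
  linarith [integral_kummerIntegrand_zero_one_le hp hq ht,
    integral_kummerIntegrand_one_two_le hp hq ht]

theorem exists_comparable_kummerIntegral {p q : ℝ} (hp : 0 < p) (hq : 0 < q) :
    ∃ c C, 0 < c ∧ ∀ t, 0 ≤ t → Comparable c C (kummerIntegral p q t) ((1 + 2 * t) ^ (-p)) :=
  ⟨_, _, by positivity, fun t ht => ⟨rpow_nonneg (by linarith) _, le_kummerIntegral hp hq ht,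
    kummerIntegral_le hp hq ht⟩⟩

theorem Erk1_eq_kummerIntegral (k x v : ℝ) :
    Erk1 k x v = Gamma (k + 1 / 2) / (√π * Gamma k)
      * (exp (x * v) * kummerIntegral k (k + 1) (x * v)) := by
  rw [Erk1, kummerIntegral]
  simp only [kummerIntegrand, add_sub_cancel_right]
  congr 1
  have h := intervalIntegral.integral_comp_sub_left (a := -1) (b := 1)
    (fun s => exp (x * v) * (exp (-(s * (x * v))) * s ^ (k - 1) * (2 - s) ^ k)) 1
  rw [sub_self, sub_neg_eq_add, one_add_one_eq_two] at h
  rw [← intervalIntegral.integral_const_mul, ← h]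
  refine intervalIntegral.integral_congr fun z _ => ?_
  rw [show (2:ℝ) - (1 - z) = 1 + z by ring, ← mul_assoc, ← mul_assoc, ← exp_add]
  ring_nf

theorem Erk1_neg_eq_kummerIntegral (k x v : ℝ) :
    Erk1 k (-x) v = Gamma (k + 1 / 2) / (√π * Gamma k)
      * (exp (x * v) * kummerIntegral (k + 1) k (x * v)) := by
  rw [Erk1, kummerIntegral]
  simp only [kummerIntegrand, add_sub_cancel_right]
  congr 1
  have h := intervalIntegral.integral_comp_add_left (a := -1) (b := 1)
    (fun s => exp (x * v) * (exp (-(s * (x * v))) * s ^ k * (2 - s) ^ (k - 1))) 1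
  rw [add_neg_cancel, one_add_one_eq_two] at h
  rw [← intervalIntegral.integral_const_mul, ← h]
  refine intervalIntegral.integral_congr fun z _ => ?_
  rw [show (2:ℝ) - (1 + z) = 1 - z by ring, ← mul_assoc, ← mul_assoc, ← exp_add]
  ring_nf

theorem measurable_Erk1 (k x : ℝ) : Measurable (Erk1 k x) := by
  have h : Measurable (Function.uncurry fun v z : ℝ =>
      exp (z * x * v) * (1 - z) ^ (k - 1) * (1 + z) ^ k) := by
    fun_prop
  exact measurable_const.mul (stronglyMeasurable_intervalIntegral_uncurry h (-1) 1).measurable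

theorem exists_comparable_Erk1 {k : ℝ} (hk : 0 < k) :
    ∃ c C, 0 < c ∧ ∀ x v, 0 ≤ x → 0 ≤ v →
      Comparable c C (Erk1 k x v) (exp (x * v) * (1 + 2 * (x * v)) ^ (-k)) ∧
      Comparable c C (Erk1 k (-x) v) (exp (x * v) * (1 + 2 * (x * v)) ^ (-(k + 1))) := by
  obtain ⟨c₁, C₁, hc₁, h₁⟩ := exists_comparable_kummerIntegral hk (by linarith : 0 < k + 1)
  obtain ⟨c₂, C₂, hc₂, h₂⟩ := exists_comparable_kummerIntegral (by linarith : 0 < k + 1) hk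
  have ha : 0 < Gamma (k + 1 / 2) / (√π * Gamma k) := by
    have := Gamma_pos_of_pos hk
    have := Gamma_pos_of_pos (by linarith : 0 < k + 1 / 2)
    positivity
  refine ⟨_, Gamma (k + 1 / 2) / (√π * Gamma k) * max C₁ C₂, mul_pos ha (lt_min hc₁ hc₂),
    fun x v hx hv => ⟨?_, ?_⟩⟩
  · rw [Erk1_eq_kummerIntegral]
    exact (((h₁ _ (mul_nonneg hx hv)).mono (min_le_left _ _) (le_max_left _ _)).mul_left
      (exp_pos _).le).const_mul ha.le
  · rw [Erk1_neg_eq_kummerIntegral]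
    exact (((h₂ _ (mul_nonneg hx hv)).mono (min_le_right _ _) (le_max_right _ _)).mul_left
      (exp_pos _).le).const_mul ha.le

theorem add_mul_div_rpow_add_one {D : ℝ} (hD : 0 < D) (a b k : ℝ) :
    (a * D + b) / D ^ (k + 1) = a * D ^ (-k) + b * D ^ (-(k + 1)) := by
  have := rpow_pos_of_pos hD k
  rw [rpow_neg hD.le, rpow_neg hD.le, rpow_add_one hD.ne']
  field_simp

noncomputable def ekIntegrand (k x1 x2 x3 l1 l2 l3 n2 n1 : ℝ) : ℝ :=
  ((n1 - l2) * (l1 - n2) * Erk1 k ((x1 - x2) / 2) (n1 - n2)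
    + (l1 - n1) * (l2 - n2) * Erk1 k (-(x1 - x2) / 2) (n1 - n2))
  * ((n1 - l3) * (n2 - l3)) * exp ((x1 + x2 - 2 * x3) * (n1 + n2) / 2)
  * Wk k l1 l2 l3 n1 n2

noncomputable def alphaPlusIntegrand (k x1 x2 x3 l1 l2 l3 n2 n1 : ℝ) : ℝ :=
  (n1 - n2) * ((l1 - l2) + (x1 - x2) * (n1 - l2) * (l1 - n2))
    / (1 + (x1 - x2) * (n1 - n2)) ^ (k + 1)
  * ((n1 - l3) * (n2 - l3)) * exp ((x1 - x3) * n1 + (x2 - x3) * n2)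
  * Wk k l1 l2 l3 n1 n2

theorem measurable_ekIntegrand (k x1 x2 x3 l1 l2 l3 : ℝ) :
    Measurable (Function.uncurry (ekIntegrand k x1 x2 x3 l1 l2 l3)) := by
  have hplus := measurable_Erk1 k ((x1 - x2) / 2)
  have hminus := measurable_Erk1 k (-(x1 - x2) / 2)
  unfold ekIntegrand Wk
  fun_prop

theorem measurable_alphaPlusIntegrand (k x1 x2 x3 l1 l2 l3 : ℝ) :
    Measurable (Function.uncurry (alphaPlusIntegrand k x1 x2 x3 l1 l2 l3)) := by
  unfold alphaPlusIntegrand Wk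
  fun_prop

theorem comparable_ekIntegrand_alphaPlusIntegrand {k c C x1 x2 x3 l1 l2 l3 n1 n2 : ℝ}
    (hE : ∀ x v, 0 ≤ x → 0 ≤ v →
      Comparable c C (Erk1 k x v) (exp (x * v) * (1 + 2 * (x * v)) ^ (-k)) ∧
      Comparable c C (Erk1 k (-x) v) (exp (x * v) * (1 + 2 * (x * v)) ^ (-(k + 1))))
    (hx : x2 ≤ x1) (hn1 : n1 ∈ Icc l2 l1) (hn2 : n2 ∈ Icc l3 l2) :
    Comparable c C (ekIntegrand k x1 x2 x3 l1 l2 l3 n2 n1)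
      (alphaPlusIntegrand k x1 x2 x3 l1 l2 l3 n2 n1) := by
  obtain ⟨hn1l, hn1u⟩ := hn1
  obtain ⟨hn2l, hn2u⟩ := hn2
  obtain ⟨hplus, hminus⟩ := hE ((x1 - x2) / 2) (n1 - n2) (by linarith) (by linarith)
  have hD : 0 < 1 + (x1 - x2) * (n1 - n2) := by nlinarith
  have hDt : 1 + 2 * ((x1 - x2) / 2 * (n1 - n2)) = 1 + (x1 - x2) * (n1 - n2) := by ring
  rw [hDt] at hplus hminus
  have hW : 0 ≤ Wk k l1 l2 l3 n1 n2 := by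
    refine rpow_nonneg (mul_nonneg (mul_nonneg (mul_nonneg (mul_nonneg (mul_nonneg ?_ ?_) ?_) ?_)
      ?_) ?_) _ <;> linarith
  have hsplit : alphaPlusIntegrand k x1 x2 x3 l1 l2 l3 n2 n1
      = ((n1 - l2) * (l1 - n2) * (exp ((x1 - x2) / 2 * (n1 - n2))
          * (1 + (x1 - x2) * (n1 - n2)) ^ (-k))
        + (l1 - n1) * (l2 - n2) * (exp ((x1 - x2) / 2 * (n1 - n2))
          * (1 + (x1 - x2) * (n1 - n2)) ^ (-(k + 1))))
        * ((n1 - l3) * (n2 - l3)) * exp ((x1 + x2 - 2 * x3) * (n1 + n2) / 2)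
        * Wk k l1 l2 l3 n1 n2 := by
    have hexp : exp ((x1 - x3) * n1 + (x2 - x3) * n2)
        = exp ((x1 - x2) / 2 * (n1 - n2)) * exp ((x1 + x2 - 2 * x3) * (n1 + n2) / 2) := by
      rw [← exp_add]
      ring_nf
    have hnum : (n1 - n2) * ((l1 - l2) + (x1 - x2) * (n1 - l2) * (l1 - n2))
        = (n1 - l2) * (l1 - n2) * (1 + (x1 - x2) * (n1 - n2)) + (l1 - n1) * (l2 - n2) := by
      ring
    rw [alphaPlusIntegrand, hexp, hnum, add_mul_div_rpow_add_one hD]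
    ring
  rw [hsplit, ekIntegrand, neg_div]
  have ha : 0 ≤ (n1 - l2) * (l1 - n2) := mul_nonneg (by linarith) (by linarith)
  have hb : 0 ≤ (l1 - n1) * (l2 - n2) := mul_nonneg (by linarith) (by linarith)
  have hP : 0 ≤ (n1 - l3) * (n2 - l3) := mul_nonneg (by linarith) (by linarith)
  exact ((((hplus.mul_left ha).add (hminus.mul_left hb)).mul_right hP).mul_right
    (exp_pos _).le).mul_right hW

/-- Lemma 5.x: two-sided estimate for `V(λ)^{2k} E_k(X,λ)`. -/
theorem lemma_alpha_plus (k : ℝ) (hk : 0 < k) :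
    ∃ C : ℝ, 0 < C ∧ ∀ l1 l2 l3 x1 x2 x3 : ℝ,
      l1 + l2 + l3 = 0 →
      l2 < l1 →
      l3 < l2 →
      x1 + x2 + x3 = 0 →
      x2 ≤ x1 →
      (C⁻¹ * (∫ n2 in l3..l2, ∫ n1 in l2..l1,
          (n1 - n2) * ((l1 - l2) + (x1 - x2) * (n1 - l2) * (l1 - n2))
            / (1 + (x1 - x2) * (n1 - n2)) ^ (k + 1)
          * ((n1 - l3) * (n2 - l3)) * Real.exp ((x1 - x3) * n1 + (x2 - x3) * n2)
          * Wk k l1 l2 l3 n1 n2)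
        ≤ Vlam l1 l2 l3 ^ (2 * k) * EkA2 k x1 x2 x3 l1 l2 l3 ∧
      Vlam l1 l2 l3 ^ (2 * k) * EkA2 k x1 x2 x3 l1 l2 l3
        ≤ C * (∫ n2 in l3..l2, ∫ n1 in l2..l1,
          (n1 - n2) * ((l1 - l2) + (x1 - x2) * (n1 - l2) * (l1 - n2))
            / (1 + (x1 - x2) * (n1 - n2)) ^ (k + 1)
          * ((n1 - l3) * (n2 - l3)) * Real.exp ((x1 - x3) * n1 + (x2 - x3) * n2)
          * Wk k l1 l2 l3 n1 n2)) := by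
  obtain ⟨c, C, hc, hE⟩ := exists_comparable_Erk1 hk
  set K := 3 * Gamma (3 * k) / Gamma k ^ 2
  have hK : 0 < K := by
    have := Gamma_pos_of_pos hk
    have := Gamma_pos_of_pos (by linarith : 0 < 3 * k)
    positivity
  refine ⟨max (K * C) (K * c)⁻¹, lt_max_of_lt_right (by positivity), ?_⟩
  intro l1 l2 l3 x1 x2 x3 _ h21 h32 _ hx
  have hV : 0 < Vlam l1 l2 l3 ^ (2 * k) :=
    rpow_pos_of_pos (mul_pos (mul_pos (by linarith) (by linarith)) (by linarith)) _
  have hEk : Vlam l1 l2 l3 ^ (2 * k) * EkA2 k x1 x2 x3 l1 l2 l3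
      = K * ∫ n2 in l3..l2, ∫ n1 in l2..l1, ekIntegrand k x1 x2 x3 l1 l2 l3 n2 n1 := by
    rw [EkA2, ← mul_assoc, mul_div_assoc', mul_div_mul_left _ _ hV.ne']
    rfl
  have hf := measurable_ekIntegrand k x1 x2 x3 l1 l2 l3
  have hg := measurable_alphaPlusIntegrand k x1 x2 x3 l1 l2 l3
  have hI := Comparable.intervalIntegral h32.le hc
    (stronglyMeasurable_intervalIntegral_uncurry hf l2 l1).measurable
    (stronglyMeasurable_intervalIntegral_uncurry hg l2 l1).measurable fun n2 hn2 =>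
      Comparable.intervalIntegral h21.le hc (hf.comp measurable_prodMk_left)
        (hg.comp measurable_prodMk_left) fun n1 hn1 => comparable_ekIntegrand_alphaPlusIntegrand
          hE hx (Ioc_subset_Icc_self hn1) (Ioc_subset_Icc_self hn2)
  rw [hEk]
  exact (hI.const_mul hK.le).le_max_inv (by positivity)
end
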